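/- Let m > 0 and p, q ∈ ℝ³. Then 4·Λ̂₊(p − q)·β·Λ̂₋(q) = (1 − m²/(λ(q)λ(p − q)))·β − (m/λ(q) − m/λ(p − q))·I₄ − β·(α·( q/λ(q) + (p − q)/λ(p − q) )) − (m/(λ(q)λ(p − q)))·(α·p) + (1/(λ(q)λ(p − q)))·β·(Σ·(p − q))·(Σ·q), where Σₖ = [[σₖ,0],[0,σₖ]] and Σ·v = v₁Σ₁ + v₂Σ₂ + v₃Σ₃ for v ∈ ℝ³. -/
import Mathlib

open Matrix

noncomputable section

/-- `lam m p = √(|p|² + m²)`. -/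
noncomputable def lam (m : ℝ) (p : EuclideanSpace ℝ (Fin 3)) : ℝ :=
  Real.sqrt (‖p‖ ^ 2 + m ^ 2)

/-- The Pauli matrices. -/
def pauli : Fin 3 → Matrix (Fin 2) (Fin 2) ℂ
  | 0 => !![0, 1; 1, 0]
  | 1 => !![0, -Complex.I; Complex.I, 0]
  | 2 => !![1, 0; 0, -1]

/-- The Dirac matrix `β`. -/
def diracBeta : Matrix (Fin 4) (Fin 4) ℂ :=
  Matrix.reindex finSumFinEquiv finSumFinEquiv
    (Matrix.fromBlocks (1 : Matrix (Fin 2) (Fin 2) ℂ) 0 0 (-1 : Matrix (Fin 2) (Fin 2) ℂ))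

/-- The Dirac matrices `αₖ`. -/
def diracAlpha (k : Fin 3) : Matrix (Fin 4) (Fin 4) ℂ :=
  Matrix.reindex finSumFinEquiv finSumFinEquiv (Matrix.fromBlocks (0 : Matrix (Fin 2) (Fin 2) ℂ) (pauli k) (pauli k) (0 : Matrix (Fin 2) (Fin 2) ℂ))

/-- `α · v` for `v ∈ ℝ³`. -/
def alphaDot (v : EuclideanSpace ℝ (Fin 3)) : Matrix (Fin 4) (Fin 4) ℂ :=
  ∑ k, (v k : ℂ) • diracAlpha k

/-- The Dirac symbol `Ĥ(p) = α·p + mβ`. -/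
def diracSymbol (m : ℝ) (p : EuclideanSpace ℝ (Fin 3)) : Matrix (Fin 4) (Fin 4) ℂ :=
  alphaDot p + (m : ℂ) • diracBeta

/-- `Λ̂₊(p) = ½(I + (m/λ(p))β + (1/λ(p)) α·p)`. -/
def LambdaPlus (m : ℝ) (p : EuclideanSpace ℝ (Fin 3)) : Matrix (Fin 4) (Fin 4) ℂ :=
  (2 : ℂ)⁻¹ • (1 + ((m / lam m p : ℝ) : ℂ) • diracBeta + (((lam m p)⁻¹ : ℝ) : ℂ) • alphaDot p)

/-- `Λ̂₋(p) = ½(I − (m/λ(p))β − (1/λ(p)) α·p)`. -/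
def LambdaMinus (m : ℝ) (p : EuclideanSpace ℝ (Fin 3)) : Matrix (Fin 4) (Fin 4) ℂ :=
  (2 : ℂ)⁻¹ • (1 - ((m / lam m p : ℝ) : ℂ) • diracBeta - (((lam m p)⁻¹ : ℝ) : ℂ) • alphaDot p)

end

/-- `Σₖ = diag(σₖ, σₖ)`. -/
def sigmaBig (k : Fin 3) : Matrix (Fin 4) (Fin 4) ℂ :=
  Matrix.reindex finSumFinEquiv finSumFinEquiv
    (Matrix.fromBlocks (pauli k) (0 : Matrix (Fin 2) (Fin 2) ℂ)
      (0 : Matrix (Fin 2) (Fin 2) ℂ) (pauli k))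

/-- `Σ · v` for `v ∈ ℝ³`. -/
noncomputable def sigmaDot (v : EuclideanSpace ℝ (Fin 3)) : Matrix (Fin 4) (Fin 4) ℂ :=
  ∑ k, (v k : ℂ) • sigmaBig k

private lemma reindex_mul' {n m : Type*} [Fintype n] [Fintype m] [DecidableEq n] [DecidableEq m]
    (e : n ≃ m) (A B : Matrix n n ℂ) :
    (Matrix.reindex e e A) * (Matrix.reindex e e B) = Matrix.reindex e e (A * B) := by
  simp [Matrix.reindex_apply, Matrix.submatrix_mul_equiv]

private lemma beta_sq : diracBeta * diracBeta = 1 := by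
  simp [diracBeta, reindex_mul', Matrix.fromBlocks_multiply, Matrix.fromBlocks_one,
    Matrix.submatrix_one_equiv]

private lemma reindex_neg {n m : Type*} [Fintype n] [Fintype m] [DecidableEq n] [DecidableEq m]
    (e : n ≃ m) (A : Matrix n n ℂ) :
    Matrix.reindex e e (-A) = -(Matrix.reindex e e A) := by
  simp [Matrix.reindex_apply, Matrix.submatrix_neg]

private lemma beta_alpha (k : Fin 3) :
    diracBeta * diracAlpha k = -(diracAlpha k * diracBeta) := by
  rw [diracBeta, diracAlpha, reindex_mul', reindex_mul', ← reindex_neg]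
  congr 1
  rw [Matrix.fromBlocks_multiply, Matrix.fromBlocks_multiply, Matrix.fromBlocks_neg]
  simp

private lemma alpha_mul (j k : Fin 3) :
    diracAlpha j * diracAlpha k = sigmaBig j * sigmaBig k := by
  simp [diracAlpha, sigmaBig, reindex_mul', Matrix.fromBlocks_multiply]

private lemma beta_alphaDot (v : EuclideanSpace ℝ (Fin 3)) :
    diracBeta * alphaDot v = -(alphaDot v * diracBeta) := by
  simp [alphaDot, Matrix.mul_sum, Matrix.sum_mul, mul_smul_comm, smul_mul_assoc,
    beta_alpha, ← Finset.sum_neg_distrib]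

private lemma alphaDot_mul (u v : EuclideanSpace ℝ (Fin 3)) :
    alphaDot u * alphaDot v = sigmaDot u * sigmaDot v := by
  simp [alphaDot, sigmaDot, Matrix.mul_sum, Matrix.sum_mul, mul_smul_comm, smul_mul_assoc,
    alpha_mul]

private lemma alphaDot_add (u v : EuclideanSpace ℝ (Fin 3)) :
    alphaDot (u + v) = alphaDot u + alphaDot v := by
  simp [alphaDot, Finset.sum_add_distrib, add_smul, PiLp.add_apply]

private lemma alphaDot_smul (c : ℝ) (v : EuclideanSpace ℝ (Fin 3)) :
    alphaDot (c • v) = (c : ℂ) • alphaDot v := by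
  simp only [alphaDot, Finset.smul_sum, smul_smul, PiLp.smul_apply, smul_eq_mul]
  refine Finset.sum_congr rfl fun k _ => ?_
  push_cast
  ring_nf

private lemma lam_pos (m : ℝ) (hm : 0 < m) (p : EuclideanSpace ℝ (Fin 3)) : 0 < lam m p := by
  apply Real.sqrt_pos.mpr
  positivity

/-- Algebraic identity for `4·Λ̂₊(p − q)·β·Λ̂₋(q)`. -/
theorem four_LambdaPlus_beta_LambdaMinus (m : ℝ) (hm : 0 < m)
    (p q : EuclideanSpace ℝ (Fin 3)) :
    (4 : ℂ) • (LambdaPlus m (p - q) * diracBeta * LambdaMinus m q) =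
      ((1 - m ^ 2 / (lam m q * lam m (p - q)) : ℝ) : ℂ) • diracBeta
      - ((m / lam m q - m / lam m (p - q) : ℝ) : ℂ) • (1 : Matrix (Fin 4) (Fin 4) ℂ)
      - diracBeta * alphaDot ((lam m q)⁻¹ • q + (lam m (p - q))⁻¹ • (p - q))
      - ((m / (lam m q * lam m (p - q)) : ℝ) : ℂ) • alphaDot p
      + (((lam m q * lam m (p - q))⁻¹ : ℝ) : ℂ) •
          (diracBeta * sigmaDot (p - q) * sigmaDot q) := by
  have hq : (lam m q : ℂ) ≠ 0 := by
    exact_mod_cast (lam_pos m hm q).ne'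
  have hr : (lam m (p - q) : ℂ) ≠ 0 := by
    exact_mod_cast (lam_pos m hm (p - q)).ne'
  have hp : p = q + (p - q) := by abel
  have hap : alphaDot p = alphaDot q + alphaDot (p - q) := by
    rw [← alphaDot_add, ← hp]
  rw [LambdaPlus, LambdaMinus, hap, alphaDot_add, alphaDot_smul, alphaDot_smul]
  simp only [smul_mul_assoc, mul_smul_comm, add_mul, sub_mul, mul_add, mul_sub, mul_one,
    one_mul, beta_sq, beta_alphaDot, alphaDot_mul, mul_neg, neg_mul, smul_neg,
    Matrix.mul_assoc]
  have h1' : alphaDot (p - q) * diracBeta = -(diracBeta * alphaDot (p - q)) := by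
    rw [beta_alphaDot, neg_neg]
  have h2' : alphaDot q * diracBeta = -(diracBeta * alphaDot q) := by
    rw [beta_alphaDot, neg_neg]
  rw [show alphaDot (p - q) * (alphaDot q * diracBeta)
          = diracBeta * (sigmaDot (p - q) * sigmaDot q) by
        rw [h2', ← alphaDot_mul]
        calc alphaDot (p - q) * -(diracBeta * alphaDot q)
            = -(alphaDot (p - q) * diracBeta) * alphaDot q := by noncomm_ring
          _ = diracBeta * (alphaDot (p - q) * alphaDot q) := by
              rw [h1']; noncomm_ring]
  push_cast
  match_scalars <;> ring
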